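/- arXiv:2511.07440 — 6 statements merged into one kernel-verified Lean document; each statement's English description precedes it below -/
import Mathlib

section
/- Let f: ℝ → ℝ be twice differentiable and let the focal curve be parametrized by c(t) = (1/(1 - f'(t)), (f(t) - t·f'(t))/(1 - f'(t))) for t with f'(t) ≠ 1. Then c'(t) = (f''(t)/(1 - f'(t))²) • (1, f(t) - t), i.e., the velocity of the focal curve at t is a scalar multiple of the arrow direction vector (1, f(t) - t). -/
theorem hasDerivAt_one_div_one_sub {g : ℝ → ℝ} {g' t : ℝ} (hg : HasDerivAt g g' t)
    (ht : g t ≠ 1) :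
    HasDerivAt (fun u => 1 / (1 - g u)) (g' / (1 - g t) ^ 2) t :=
  ((hasDerivAt_const t 1).div (hg.const_sub 1) (sub_ne_zero.mpr ht.symm)).congr_deriv (by ring)

/-- Since `g = f'` at `t`, the terms `f'(t)` and `g(t)` cancel in the derivative of the
numerator, leaving `-t g'`. -/
theorem hasDerivAt_sub_mul_div_one_sub {f g : ℝ → ℝ} {g' t : ℝ} (hf : HasDerivAt f (g t) t)
    (hg : HasDerivAt g g' t) (ht : g t ≠ 1) :
    HasDerivAt (fun u => (f u - u * g u) / (1 - g u)) (g' / (1 - g t) ^ 2 * (f t - t)) t := by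
  have hnum : HasDerivAt (fun u => f u - u * g u) (-(t * g')) t :=
    (hf.sub ((hasDerivAt_id' t).mul hg)).congr_deriv (by ring)
  exact (hnum.div (hg.const_sub 1) (sub_ne_zero.mpr ht.symm)).congr_deriv (by ring)

theorem hasDerivAt_focalCurve {f g : ℝ → ℝ} {g' t : ℝ} (hf : HasDerivAt f (g t) t)
    (hg : HasDerivAt g g' t) (ht : g t ≠ 1) :
    HasDerivAt (fun u => ((1 / (1 - g u), (f u - u * g u) / (1 - g u)) : ℝ × ℝ))
      ((g' / (1 - g t) ^ 2) • ((1, f t - t) : ℝ × ℝ)) t :=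
  ((hasDerivAt_one_div_one_sub hg ht).prodMk
    (hasDerivAt_sub_mul_div_one_sub hf hg ht)).congr_deriv (by simp [Prod.smul_mk])

/-- The velocity of the focal curve at `t` equals
`(f''(t)/(1 - f'(t))²) • (1, f t - t)`, a scalar multiple of the arrow
direction vector `(1, f t - t)`. -/
theorem stmt_1 (f : ℝ → ℝ) (hf : Differentiable ℝ f)
    (hf' : Differentiable ℝ (deriv f)) (t : ℝ) (ht : deriv f t ≠ 1) :
    HasDerivAt
      (fun u => ((1 / (1 - deriv f u),
        (f u - u * deriv f u) / (1 - deriv f u)) : ℝ × ℝ))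
      ((deriv (deriv f) t / (1 - deriv f t) ^ 2) • ((1, f t - t) : ℝ × ℝ)) t :=
  hasDerivAt_focalCurve (hf t).hasDerivAt (hf' t).hasDerivAt ht
end

section
/- For f(x) = 1/(4x), every point of the focal curve c(t) = (1/(1 - f'(t)), (f(t) - t·f'(t))/(1 - f'(t))) with t ≠ 0 satisfies (x - 1/2)² + y² = 1/4, i.e., lies on the circle of radius 1/2 centered at (1/2, 0). -/
/-!
With `f' t = -1/(4t²)` one has `1 - f' t = (4t² + 1)/(4t²)`, so the focal point at `t` is
`(4t²/(4t² + 1), 2t/(4t² + 1))`. In terms of `s = 2t` this is `(s²/(1 + s²), s/(1 + s²))`,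
the standard rational parametrization of the circle `(x - 1/2)² + y² = 1/4`.
-/

theorem deriv_one_div_const_mul {𝕜 : Type*} [NontriviallyNormedField 𝕜] {a x : 𝕜}
    (ha : a ≠ 0) (hx : x ≠ 0) :
    deriv (fun x => 1 / (a * x)) x = -1 / (a * x ^ 2) := by
  have h := (hasDerivAt_inv hx).const_mul a⁻¹
  convert h.deriv using 1
  · simp only [one_div, mul_inv]
  · field_simp

theorem circle_rational_parametrization (s : ℝ) :
    (s ^ 2 / (1 + s ^ 2) - 1 / 2) ^ 2 + (s / (1 + s ^ 2)) ^ 2 = 1 / 4 := by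
  have : 1 + s ^ 2 ≠ 0 := by positivity
  field_simp
  ring

theorem focal_point_one_div_four_mul {t : ℝ} (ht : t ≠ 0) :
    let d := deriv (fun x => 1 / (4 * x)) t
    1 / (1 - d) = (2 * t) ^ 2 / (1 + (2 * t) ^ 2) ∧
      (1 / (4 * t) - t * d) / (1 - d) = 2 * t / (1 + (2 * t) ^ 2) := by
  intro d
  have hd : d = -1 / (4 * t ^ 2) := deriv_one_div_const_mul four_ne_zero ht
  have hden : 1 + (2 * t) ^ 2 ≠ 0 := by positivity
  have h1 : 1 - d = (1 + (2 * t) ^ 2) / (2 * t) ^ 2 := by rw [hd]; field_simp; ring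
  rw [h1, hd]
  constructor
  · field_simp
  · field_simp
    ring

/-- For `f x = 1/(4x)`, every point of the focal curve with `t ≠ 0` lies on
the circle of radius `1/2` centered at `(1/2, 0)`. -/
theorem stmt_2 (f : ℝ → ℝ) (hf : ∀ x, f x = 1 / (4 * x)) (t : ℝ) (ht : t ≠ 0) :
    let x := 1 / (1 - deriv f t)
    let y := (f t - t * deriv f t) / (1 - deriv f t)
    (x - 1 / 2) ^ 2 + y ^ 2 = 1 / 4 := by
  obtain rfl : f = fun x => 1 / (4 * x) := funext hf
  obtain ⟨hx, hy⟩ := focal_point_one_div_four_mul ht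
  intro x y
  rw [show x = _ from hx, show y = _ from hy]
  exact circle_rational_parametrization (2 * t)
end

section
/- For f(x) = exp(x), every point (x, y) on the focal curve with parameter t ≠ 0 satisfies y = (x - 1)·(1 - log((x - 1)/x)), where x = 1/(1 - eᵗ). -/
open Real

theorem one_div_one_sub_sub_one_div_self {K : Type*} [Field K] {a : K} (ha : a ≠ 1) :
    (1 / (1 - a) - 1) / (1 / (1 - a)) = a := by
  have : 1 - a ≠ 0 := sub_ne_zero.2 ha.symm
  field_simp
  ring

/-- For `f = exp`, every point `(x, y)` on the focal curve with parameter
`t ≠ 0` satisfies `y = (x - 1) * (1 - log ((x - 1)/x))`. -/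
theorem stmt_3 (t : ℝ) (ht : t ≠ 0) :
    let f := Real.exp
    let x := 1 / (1 - Real.exp t)
    let y := (f t - t * deriv f t) / (1 - deriv f t)
    y = (x - 1) * (1 - Real.log ((x - 1) / x)) := by
  intro f x y
  have hexp : exp t ≠ 1 := fun h => ht (exp_eq_one_iff t |>.1 h)
  have hlog : log ((x - 1) / x) = t := by
    rw [one_div_one_sub_sub_one_div_self hexp, log_exp]
  have hden : 1 - exp t ≠ 0 := sub_ne_zero.2 hexp.symm
  simp only [y, f, Real.deriv_exp, hlog, x]
  field_simp
  ring
end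

section
/- Let g be differentiable and suppose G vanishes on the focal curve of g. For f(x) = g(x - c), every point (x, y) of the focal curve of f satisfies G(x, y + c(x - 1)) = 0. -/
/-- If `G` vanishes on the focal curve of `g`, then for `f x = g (x - c)`,
every point `(x, y)` of the focal curve of `f` satisfies
`G (x, y + c*(x - 1)) = 0`. -/
theorem stmt_10 (g : ℝ → ℝ) (hg : Differentiable ℝ g) (G : ℝ × ℝ → ℝ)
    (hG : ∀ t : ℝ, deriv g t ≠ 1 →
      G (1 / (1 - deriv g t), (g t - t * deriv g t) / (1 - deriv g t)) = 0)
    (c : ℝ) (f : ℝ → ℝ) (hf : ∀ x, f x = g (x - c))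
    (t : ℝ) (ht : deriv f t ≠ 1) :
    let x := 1 / (1 - deriv f t)
    let y := (f t - t * deriv f t) / (1 - deriv f t)
    G (x, y + c * (x - 1)) = 0 := by
  have hfe : f = fun x => g (x - c) := funext hf
  have hd : deriv f t = deriv g (t - c) := by
    rw [hfe, deriv_comp_sub_const]
  intro x y
  have hne : deriv g (t - c) ≠ 1 := hd ▸ ht
  have h := hG (t - c) hne
  have hsub : (1 : ℝ) - deriv g (t - c) ≠ 0 := by
    intro h0; apply hne; linarith
  have hx : x = 1 / (1 - deriv g (t - c)) := by simp [x, hd]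
  have hy : y + c * (x - 1) =
      (g (t - c) - (t - c) * deriv g (t - c)) / (1 - deriv g (t - c)) := by
    simp only [x, y, hd, hf t]
    field_simp
    ring
  rw [hy, hx]
  exact h
end

section
/- Let g be differentiable and suppose G vanishes on the focal curve of g. For f(x) = c·g(x) with c ≠ 0, every point (x, y) of the focal curve of f with 1 + (c - 1)x ≠ 0 satisfies G(cx/(1 + (c - 1)x), y/(1 + (c - 1)x)) = 0. -/
/-!
Scaling `g` by `c` scales its slope `m` by `c`, so the focal point `(1, g t - t m) / (1 - m)` of `g`
becomes `(1, c (g t - t m)) / (1 - c m)`. The projective map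
`(x, y) ↦ (c x, y) / (1 + (c - 1) x)` undoes this: its denominator at the new point is
`c (1 - m) / (1 - c m)`, nonzero exactly when `c ≠ 0` and `m ≠ 1`, and then it sends that point back to the focal point of `g`.
-/

noncomputable def focalPoint (a m t : ℝ) : ℝ × ℝ :=
  (1 / (1 - m), (a - t * m) / (1 - m))

noncomputable def focalRescale (c : ℝ) (p : ℝ × ℝ) : ℝ × ℝ :=
  (c * p.1 / (1 + (c - 1) * p.1), p.2 / (1 + (c - 1) * p.1))

lemma one_add_sub_one_mul_one_div {c m : ℝ} (h : 1 - c * m ≠ 0) :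
    1 + (c - 1) * (1 / (1 - c * m)) = c * (1 - m) / (1 - c * m) := by
  field_simp
  ring

lemma focalRescale_focalPoint_const_mul {a m t c : ℝ} (h : 1 - c * m ≠ 0) (hc : c ≠ 0)
    (hm : 1 - m ≠ 0) :
    focalRescale c (focalPoint (c * a) (c * m) t) = focalPoint a m t := by
  simp only [focalRescale, focalPoint, one_add_sub_one_mul_one_div h, Prod.mk.injEq]
  constructor <;> field_simp

theorem stmt_11_general (g : ℝ → ℝ) (G : ℝ × ℝ → ℝ)
    (hG : ∀ t : ℝ, deriv g t ≠ 1 →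
      G (1 / (1 - deriv g t), (g t - t * deriv g t) / (1 - deriv g t)) = 0)
    (c : ℝ) (f : ℝ → ℝ) (hf : ∀ x, f x = c * g x)
    (t : ℝ) (ht : deriv f t ≠ 1)
    (hx : 1 + (c - 1) * (1 / (1 - deriv f t)) ≠ 0) :
    let x := 1 / (1 - deriv f t)
    let y := (f t - t * deriv f t) / (1 - deriv f t)
    G (c * x / (1 + (c - 1) * x), y / (1 + (c - 1) * x)) = 0 := by
  have hf' : deriv f t = c * deriv g t := by rw [funext hf, deriv_const_mul_field]
  have hcm : 1 - c * deriv g t ≠ 0 := sub_ne_zero.mpr (hf' ▸ ht).symm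
  rw [hf', one_add_sub_one_mul_one_div hcm] at hx
  obtain ⟨⟨hc, hm⟩, -⟩ := div_ne_zero_iff.mp hx |>.imp_left mul_ne_zero_iff.mp
  show G (focalRescale c (focalPoint (f t) (deriv f t) t)) = 0
  rw [hf t, hf', focalRescale_focalPoint_const_mul hcm hc hm]
  exact hG t (sub_ne_zero.mp hm).symm

/-- If `G` vanishes on the focal curve of `g`, then for `f x = c * g x` with
`c ≠ 0`, every focal point `(x, y)` of `f` with `1 + (c - 1)x ≠ 0` satisfies
`G (c*x/(1 + (c-1)*x), y/(1 + (c-1)*x)) = 0`. -/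
theorem stmt_11 (g : ℝ → ℝ) (hg : Differentiable ℝ g) (G : ℝ × ℝ → ℝ)
    (hG : ∀ t : ℝ, deriv g t ≠ 1 →
      G (1 / (1 - deriv g t), (g t - t * deriv g t) / (1 - deriv g t)) = 0)
    (c : ℝ) (hc : c ≠ 0) (f : ℝ → ℝ) (hf : ∀ x, f x = c * g x)
    (t : ℝ) (ht : deriv f t ≠ 1)
    (hx : 1 + (c - 1) * (1 / (1 - deriv f t)) ≠ 0) :
    let x := 1 / (1 - deriv f t)
    let y := (f t - t * deriv f t) / (1 - deriv f t)
    G (c * x / (1 + (c - 1) * x), y / (1 + (c - 1) * x)) = 0 :=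
  stmt_11_general g G hG c f hf t ht hx
end

section
/- Let f(x) = ax + b and g(x) = cx + d with a ≠ 1, c ≠ 1, and ac ≠ 1. Define F_f = (1/(1-a), b/(1-a)), F_g = (1/(1-c) + 1, d/(1-c)), and F_{g∘f} = (2/(1-ac), (bc+d)/(1-ac)). Then (1 - t)·F_f + t·F_g = F_{g∘f} for t = (1-c)/(1-ac); in particular the three points are collinear. -/
/-!
The weight `t = (1 - c)/(1 - ac)` is chosen so that `(1 - t)/(1 - a) = c/(1 - ac)` and
`t/(1 - c) = 1/(1 - ac)`: both weighted foci then share the denominator `1 - ac`, and their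
numerators add up to those of `F_{g∘f}`, namely `c + 1 + (1 - c) = 2` and `cb + d`.
-/

section CollinearFoci

variable {K : Type*} [Field K] {a c : K}

theorem one_sub_weight_div_one_sub (ha : a ≠ 1) (hac : a * c ≠ 1) :
    (1 - (1 - c) / (1 - a * c)) / (1 - a) = c / (1 - a * c) := by
  have hac' : 1 - a * c ≠ 0 := sub_ne_zero.mpr hac.symm
  have one_sub_weight : 1 - (1 - c) / (1 - a * c) = c * (1 - a) / (1 - a * c) := by
    rw [eq_div_iff hac', sub_mul, div_mul_cancel₀ _ hac']
    ring
  rw [one_sub_weight, div_right_comm, mul_div_cancel_right₀ _ (sub_ne_zero.mpr ha.symm)]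

theorem weight_div_one_sub (hc : c ≠ 1) :
    (1 - c) / (1 - a * c) / (1 - c) = 1 / (1 - a * c) := by
  rw [div_right_comm, div_self (sub_ne_zero.mpr hc.symm)]

end CollinearFoci

/-- Foci of linear functions `f x = a*x + b`, `g x = c*x + d` and their
composition are collinear: `(1 - t) • F_f + t • F_g = F_{g∘f}` with
`t = (1 - c)/(1 - a*c)`. -/
theorem stmt_14 (a b c d : ℝ) (ha : a ≠ 1) (hc : c ≠ 1) (hac : a * c ≠ 1) :
    let Ff : ℝ × ℝ := (1 / (1 - a), b / (1 - a))
    let Fg : ℝ × ℝ := (1 / (1 - c) + 1, d / (1 - c))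
    let Fgf : ℝ × ℝ := (2 / (1 - a * c), (b * c + d) / (1 - a * c))
    let t : ℝ := (1 - c) / (1 - a * c)
    (1 - t) • Ff + t • Fg = Fgf := by
  intro Ff Fg Fgf t
  have hf : (1 - t) / (1 - a) = c / (1 - a * c) := one_sub_weight_div_one_sub ha hac
  have hg : t / (1 - c) = 1 / (1 - a * c) := weight_div_one_sub hc
  ext
  · calc (1 - t) * (1 / (1 - a)) + t * (1 / (1 - c) + 1)
        = (1 - t) / (1 - a) + t / (1 - c) + t := by ring
      _ = 2 / (1 - a * c) := by rw [hf, hg]; ring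
  · calc (1 - t) * (b / (1 - a)) + t * (d / (1 - c))
        = b * ((1 - t) / (1 - a)) + d * (t / (1 - c)) := by ring
      _ = (b * c + d) / (1 - a * c) := by rw [hf, hg]; ring
end
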